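/- Fix n ≥ 1 and a constant c > 0. Suppose real sequences (a_{n,m})_{0≤m≤n} and (b_{n,m})_{1≤m≤n} satisfy Σ_{1≤ℓ≤m} λ*_{n,m,ℓ}·(a_{n,m} − a_{n,m−ℓ}) = b_{n,m} for all 1 ≤ m ≤ n, with |a_{n,0}| ≤ c·n, |a_{n,1}| ≤ 2c, and |b_{n,m}| ≤ c/n for all 2 ≤ m ≤ n. Then |a_{n,m}| ≤ 2c·H_m for all 1 ≤ m ≤ n. -/
import Mathlib


open Filter MeasureTheory Real

namespace EA

/-- The transition probability `λ_{n,m,ℓ}`. -/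
noncomputable def lam (n m ℓ : ℕ) : ℝ :=
  (1 - 1/(n:ℝ))^n * ((n:ℝ) - 1)^(-(ℓ:ℤ)) *
    ∑ j ∈ Finset.range (min (n - m) (m - ℓ) + 1),
      ((n - m).choose j : ℝ) * (m.choose (j + ℓ) : ℝ) * ((n:ℝ) - 1)^(-(2*(j:ℤ)))

/-- `Λ_{n,m} = Σ_{1 ≤ ℓ ≤ m} λ_{n,m,ℓ}`. -/
noncomputable def Lam (n m : ℕ) : ℝ := ∑ ℓ ∈ Finset.range m, lam n m (ℓ + 1)

/-- The probability generating function `P_{n,m}(t)` of `X_{n,m}`. -/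
noncomputable def Pgen (n : ℕ) : ℕ → ℝ → ℝ
  | 0, _ => 1
  | (m+1), t =>
      (t * ∑ ℓ ∈ Finset.range (m+1), lam n (m+1) (ℓ+1) * Pgen n (m - ℓ) t) /
        (1 - (1 - Lam n (m+1)) * t)
  decreasing_by exact Nat.lt_succ_of_le (Nat.sub_le m ℓ)

/-- The entire function `S_r(z)`. -/
noncomputable def S (r : ℕ) (z : ℝ) : ℝ :=
  ∑' ℓ : ℕ, (z^(ℓ+1) / (Nat.factorial (ℓ+1) : ℝ)) *
    ∑ j ∈ Finset.range (ℓ+1), ((ℓ + 1 - j : ℕ) : ℝ)^r * (1 - z)^j / (Nat.factorial j : ℝ)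

/-- Harmonic numbers `H_m`. -/
noncomputable def Hm (m : ℕ) : ℝ := ∑ j ∈ Finset.range m, 1/((j:ℝ)+1)

/-- Second-order harmonic numbers `H_m^{(2)}`. -/
noncomputable def Hm2 (m : ℕ) : ℝ := ∑ j ∈ Finset.range m, 1/((j:ℝ)+1)^2

/-- `φ₁(z) = ∫_0^z (1/S₁(t) - 1/t) dt`. -/
noncomputable def phi1 (z : ℝ) : ℝ := ∫ t in (0:ℝ)..z, (1 / S 1 t - 1 / t)

/-- `φ₂(z)`. -/
noncomputable def phi2 (z : ℝ) : ℝ :=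
  1/2 - ∫ x in (0:ℝ)..z,
    (S 2 x * deriv (S 1) x / (2 * (S 1 x)^3) - S 0 x / (S 1 x)^2
      - 1/(2 * S 1 x) - 1/(2*x^2) + 1/x)

/-- `ψ₁(z)`. -/
noncomputable def psi1 (z : ℝ) : ℝ :=
  ∫ x in (0:ℝ)..z, (S 2 x / (S 1 x)^3 - 1/x^2 + 2/x)

/-- `ψ₂(z)`. -/
noncomputable def psi2 (z : ℝ) : ℝ :=
  7/12 - ∫ x in (0:ℝ)..z,
    (5 * deriv (S 1) x * (S 2 x)^2 / (2*(S 1 x)^5)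
      - (2 * deriv (S 1) x * S 3 x + S 2 x * deriv (S 2) x + 6 * S 0 x * S 2 x) / (2*(S 1 x)^4)
      - S 0 x / (S 1 x)^3 + 2/(S 1 x)^2 - 1/x^3 + 3/x^2 - 11/(2*x))

/-- The mean sequence `μ_{n,m}`. -/
noncomputable def mu (n : ℕ) : ℕ → ℝ
  | 0 => 0
  | (m+1) =>
      (1 + ∑ ℓ ∈ Finset.range (m+1), lam n (m+1) (ℓ+1) * mu n (m - ℓ)) / Lam n (m+1)
  decreasing_by exact Nat.lt_succ_of_le (Nat.sub_le m ℓ)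

/-- The variance sequence `σ²_{n,m}`, the unique solution of
`Σ_{1≤ℓ≤m} λ_{n,m,ℓ}(σ²_{n,m} − σ²_{n,m−ℓ}) = −1 + Σ_{1≤ℓ≤m} λ_{n,m,ℓ}(μ_{n,m} − μ_{n,m−ℓ})²`
with `σ²_{n,0} = 0`. -/
noncomputable def varX (n : ℕ) : ℕ → ℝ
  | 0 => 0
  | (m+1) =>
      (-1 + ∑ ℓ ∈ Finset.range (m+1), lam n (m+1) (ℓ+1) *
          (varX n (m - ℓ) + (mu n (m+1) - mu n (m - ℓ))^2)) / Lam n (m+1)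
  decreasing_by exact Nat.lt_succ_of_le (Nat.sub_le m ℓ)

/-- The normalized transition probability `λ*_{n,m,ℓ}`. -/
noncomputable def lamStar (n m ℓ : ℕ) : ℝ :=
  ∑ j ∈ Finset.range (min (n + 1 - m) (m - ℓ) + 1),
    ((n + 1 - m).choose j : ℝ) * (m.choose (j + ℓ) : ℝ) * (n:ℝ)^(-((ℓ:ℤ) + 2*j))

/-- The probability generating function `Q_{n,m}` for LeadingOnes. -/
noncomputable def QLO (p : ℝ) (n : ℕ) : ℕ → ℝ → ℝ
  | 0, _ => 1
  | (m+1), t =>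
      (p * (1-p)^(n-(m+1)) * t / (1 - (1 - p*(1-p)^(n-(m+1))) * t)) *
        ((2:ℝ)^(-(m:ℤ)) + ∑ ℓ ∈ Finset.range m, QLO p n (m-ℓ) t / 2^(ℓ+1))
  decreasing_by exact Nat.lt_succ_of_le (Nat.sub_le m ℓ)

/-- The mean `ν_{n,m}` of `Y_{n,m}` (LeadingOnes). -/
noncomputable def nuLO (p : ℝ) (n : ℕ) : ℕ → ℝ
  | 0 => 0
  | (m+1) =>
      1/(p*(1-p)^(n-(m+1))) + ∑ ℓ ∈ Finset.range m, nuLO p n (m-ℓ) / 2^(ℓ+1)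
  decreasing_by exact Nat.lt_succ_of_le (Nat.sub_le m ℓ)

/-- The second moment `s_{n,m}` of `Y_{n,m}` (LeadingOnes). -/
noncomputable def sLO (p : ℝ) (n : ℕ) : ℕ → ℝ
  | 0 => 0
  | (m+1) =>
      (2 * nuLO p n (m+1) - 1)/(p*(1-p)^(n-(m+1)))
        + ∑ ℓ ∈ Finset.range m, sLO p n (m-ℓ) / 2^(ℓ+1)
  decreasing_by exact Nat.lt_succ_of_le (Nat.sub_le m ℓ)


lemma lamStar_nonneg {n : ℕ} (hn : 1 ≤ n) (m ℓ : ℕ) : 0 ≤ lamStar n m ℓ := by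
  have h0 : (0:ℝ) < n := by exact_mod_cast hn
  unfold lamStar
  apply Finset.sum_nonneg
  intro j _
  positivity

lemma lamStar_diag (n m : ℕ) : lamStar n m m = (n:ℝ)^(-(m:ℤ)) := by
  unfold lamStar
  simp

lemma lamStar_ge {n : ℕ} (hn : 1 ≤ n) (m ℓ : ℕ) :
    (m.choose ℓ : ℝ) * ((n:ℝ)⁻¹)^ℓ ≤ lamStar n m ℓ := by
  have h0 : (0:ℝ) < n := by exact_mod_cast hn
  unfold lamStar
  have h := Finset.single_le_sum
    (f := fun j => ((n + 1 - m).choose j : ℝ) * (m.choose (j + ℓ) : ℝ) * (n:ℝ)^(-((ℓ:ℤ) + 2*j)))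
    (s := Finset.range (min (n + 1 - m) (m - ℓ) + 1))
    (fun j _ => by positivity) (Finset.mem_range.mpr (Nat.succ_pos _))
  simpa [zpow_neg, inv_pow] using h

lemma Lam_ge {n : ℕ} (hn : 1 ≤ n) {m : ℕ} (hm : 1 ≤ m) :
    (m:ℝ)/n ≤ ∑ ℓ ∈ Finset.range m, lamStar n m (ℓ+1) := by
  have h0 : (0:ℝ) < n := by exact_mod_cast hn
  set x : ℝ := (n:ℝ)⁻¹ with hx
  have hxpos : 0 < x := by positivity
  have step1 : ∑ ℓ ∈ Finset.range m, (m.choose (ℓ+1) : ℝ) * x^(ℓ+1)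
      ≤ ∑ ℓ ∈ Finset.range m, lamStar n m (ℓ+1) :=
    Finset.sum_le_sum fun ℓ _ => lamStar_ge hn m (ℓ+1)
  have e : ∑ ℓ ∈ Finset.range m, (m.choose (ℓ+1) : ℝ) * x^(ℓ+1) = (x+1)^m - 1 := by
    rw [add_pow, Finset.sum_range_succ']
    simp [mul_comm]
  have bern : 1 + (m:ℝ) * x ≤ (1 + x)^m := one_add_mul_le_pow (by linarith) m
  have hxn : x * (n:ℝ) = 1 := inv_mul_cancel₀ h0.ne'
  have hmn : (m:ℝ)/n = (m:ℝ) * x := by rw [div_eq_mul_inv]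
  rw [hmn]
  rw [e, add_comm x 1] at step1
  nlinarith [step1, bern]

/-- Lemma 6 of the paper. -/
theorem recurrence_harmonic_bound_variation (n : ℕ) (hn : 1 ≤ n) (c : ℝ) (hc : 0 < c)
    (a b : ℕ → ℝ)
    (hrec : ∀ m, 1 ≤ m → m ≤ n →
      ∑ ℓ ∈ Finset.range m, lamStar n m (ℓ+1) * (a m - a (m - (ℓ+1))) = b m)
    (ha0 : |a 0| ≤ c * n)
    (ha1 : |a 1| ≤ 2 * c)
    (hb : ∀ m, 2 ≤ m → m ≤ n → |b m| ≤ c / n) :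
    ∀ m, 1 ≤ m → m ≤ n → |a m| ≤ 2 * c * Hm m := by
  have hnpos : (0:ℝ) < n := by exact_mod_cast hn
  have hHm_mono : ∀ i j : ℕ, i ≤ j → Hm i ≤ Hm j := by
    intro i j h
    apply Finset.sum_le_sum_of_subset_of_nonneg (Finset.range_subset_range.mpr h)
    intro q _ _; positivity
  have hHm_nonneg : ∀ i : ℕ, 0 ≤ Hm i := by
    intro i; apply Finset.sum_nonneg; intro q _; positivity
  intro m
  induction m using Nat.strong_induction_on with
  | _ m ih =>
    intro hm1 hmn
    rcases eq_or_lt_of_le hm1 with h1 | h2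
    · rw [← h1]
      have hH1 : Hm 1 = 1 := by simp [Hm]
      rw [hH1, mul_one]
      exact ha1
    · obtain ⟨k, rfl⟩ : ∃ k, m = k + 2 := ⟨m - 2, by omega⟩
      set L := ∑ ℓ ∈ Finset.range (k+2), lamStar n (k+2) (ℓ+1) with hL
      have hLge : ((k:ℝ)+2)/n ≤ L := by
        have := Lam_ge hn (m := k+2) (by omega)
        push_cast at this
        exact this
      have hLpos : 0 < L := lt_of_lt_of_le (by positivity) hLge
      have key : a (k+2) * L = b (k+2) + ∑ ℓ ∈ Finset.range (k+2),
          lamStar n (k+2) (ℓ+1) * a (k+2 - (ℓ+1)) := by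
        have h := hrec (k+2) (by omega) hmn
        have h2 : ∑ ℓ ∈ Finset.range (k+2), (lamStar n (k+2) (ℓ+1) * a (k+2)
            - lamStar n (k+2) (ℓ+1) * a (k+2-(ℓ+1))) = b (k+2) := by
          simpa [mul_sub] using h
        rw [Finset.sum_sub_distrib, ← Finset.sum_mul] at h2
        rw [hL]
        linear_combination h2
      have habs : |a (k+2)| * L ≤ |b (k+2)| + ∑ ℓ ∈ Finset.range (k+2),
          lamStar n (k+2) (ℓ+1) * |a (k+2 - (ℓ+1))| := by
        rw [← abs_of_pos hLpos, ← abs_mul, key]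
        refine (abs_add_le _ _).trans ?_
        gcongr
        refine (Finset.abs_sum_le_sum_abs _ _).trans ?_
        apply Finset.sum_le_sum
        intro ℓ _
        rw [abs_mul, abs_of_nonneg (lamStar_nonneg hn _ _)]
      rw [Finset.sum_range_succ] at habs
      have hlast : lamStar n (k+2) (k+1+1) * |a (k+2 - (k+1+1))| ≤ c / n := by
        have he : k+2 - (k+1+1) = 0 := by omega
        rw [he, lamStar_diag]
        have h1 : (n:ℝ)^(-((k:ℤ)+2)) ≤ (n:ℝ)^(-2:ℤ) := by
          apply zpow_le_zpow_right₀ (by exact_mod_cast hn)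
          omega
        have h2 : ((k+2:ℕ):ℤ) = (k:ℤ)+2 := by push_cast; ring
        calc (n:ℝ)^(-((k+2:ℕ):ℤ)) * |a 0| ≤ (n:ℝ)^(-2:ℤ) * (c*n) := by
              rw [h2]
              exact mul_le_mul h1 ha0 (abs_nonneg _) (by positivity)
          _ = c / n := by
              rw [zpow_neg]
              rw [show ((n:ℝ)^(2:ℤ)) = (n:ℝ)^(2:ℕ) from zpow_natCast _ 2]
              field_simp
      have hmid : ∑ ℓ ∈ Finset.range (k+1), lamStar n (k+2) (ℓ+1) * |a (k+2 - (ℓ+1))|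
          ≤ (2 * c * Hm (k+1)) * L := by
        calc ∑ ℓ ∈ Finset.range (k+1), lamStar n (k+2) (ℓ+1) * |a (k+2 - (ℓ+1))|
            ≤ ∑ ℓ ∈ Finset.range (k+1), lamStar n (k+2) (ℓ+1) * (2 * c * Hm (k+1)) := by
              apply Finset.sum_le_sum
              intro ℓ hℓ
              have hℓk : ℓ < k+1 := Finset.mem_range.mp hℓ
              have hi1 : 1 ≤ k+2-(ℓ+1) := by omega
              have hilt : k+2-(ℓ+1) < k+2 := by omega
              have hin : k+2-(ℓ+1) ≤ n := by omega
              have := ih _ hilt hi1 hin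
              have hmono := hHm_mono (k+2-(ℓ+1)) (k+1) (by omega)
              apply mul_le_mul_of_nonneg_left _ (lamStar_nonneg hn _ _)
              calc |a (k+2-(ℓ+1))| ≤ 2*c*Hm (k+2-(ℓ+1)) := this
                _ ≤ 2*c*Hm (k+1) := by nlinarith [hHm_nonneg (k+2-(ℓ+1))]
          _ = (∑ ℓ ∈ Finset.range (k+1), lamStar n (k+2) (ℓ+1)) * (2*c*Hm (k+1)) := by
              rw [Finset.sum_mul]
          _ ≤ L * (2*c*Hm (k+1)) := by
              apply mul_le_mul_of_nonneg_right _ (mul_nonneg (by positivity) (hHm_nonneg _))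
              have hsplit : L = (∑ ℓ ∈ Finset.range (k+1), lamStar n (k+2) (ℓ+1))
                  + lamStar n (k+2) (k+1+1) := by rw [hL, Finset.sum_range_succ]
              have := lamStar_nonneg hn (k+2) (k+1+1)
              linarith
          _ = (2 * c * Hm (k+1)) * L := mul_comm _ _
      have hbb : |b (k+2)| ≤ c / n := hb (k+2) (by omega) hmn
      have hHsucc : Hm (k+2) = Hm (k+1) + 1/((k:ℝ)+2) := by
        rw [Hm, Finset.sum_range_succ, ← Hm]
        push_cast
        ring
      -- combine
      have hfinal : |a (k+2)| * L ≤ (2*c*Hm (k+2)) * L := by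
        have h2cn : 2*(c/n) ≤ (2*c/((k:ℝ)+2)) * L := by
          have : (2*c/((k:ℝ)+2)) * (((k:ℝ)+2)/n) = 2*(c/n) := by
            rw [div_mul_div_comm]
            rw [mul_comm (2*c) ((k:ℝ)+2), mul_div_mul_left _ _ (by positivity : ((k:ℝ)+2) ≠ 0)]
            ring
          calc 2*(c/n) = (2*c/((k:ℝ)+2)) * (((k:ℝ)+2)/n) := this.symm
            _ ≤ (2*c/((k:ℝ)+2)) * L := by
                apply mul_le_mul_of_nonneg_left hLge (by positivity)
        rw [hHsucc]
        have : (2*c*(Hm (k+1) + 1/((k:ℝ)+2))) * L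
            = (2*c*Hm (k+1)) * L + (2*c/((k:ℝ)+2)) * L := by ring
        rw [this]
        linarith
      exact le_of_mul_le_mul_right hfinal hLpos

end EA
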